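/- arXiv:1503.02350 — 3 statements merged into one kernel-verified Lean document; each statement's English description precedes it below -/
import Mathlib

section
/- Let π denote the real number pi. Let v₀ > 0 and let B, m : (0, v₀] → ℝ, with B continuous, B(v) > 0 for all v ∈ (0, v₀], B(v) → 0 as v → 0⁺, and m continuous. Assume that 1 − (16π)^{1/2} B(v)^{−1/2} m(v) ≥ 0 for all v ∈ (0, v₀], that the function v ↦ (1 − (16π)^{1/2} B(v)^{−1/2} m(v))^{1/2} is integrable on (0, v₀), and that B is differentiable at every v ∈ (0, v₀) with B'(v) ≤ B(v)^{−1/2} (16π − (16π)^{3/2} B(v)^{−1/2} m(v))^{1/2}. Then B(v₀) ≤ (36π)^{1/3} (∫₀^{v₀} (1 − (16π)^{1/2} B(v)^{−1/2} m(v))^{1/2} dv)^{2/3}. -/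
/-!
Along the flow, `d/dv B^{3/2} = (3/2) B^{1/2} B' ≤ (3/2) (∫_K H²)^{1/2}`, and
`∫_K H² = 16π (1 - (16π)^{1/2} B^{-1/2} m)`, so `d/dv B^{3/2} ≤ (36π)^{1/2} h(v)` with
`h = (1 - (16π)^{1/2} B^{-1/2} m)^{1/2}`. Since `B(v) → 0` as `v → 0⁺`, integrating from `0` gives
`B(v₀)^{3/2} ≤ (36π)^{1/2} ∫₀^{v₀} h`; raise both sides to the power `2/3`.
-/

open Set MeasureTheory Real Filter Topology

theorem sub_le_integral_of_tendsto_nhdsGT_of_deriv_le {g φ : ℝ → ℝ} {a b L : ℝ} (hab : a < b)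
    (hcont : ContinuousOn g (Ioc a b)) (hlim : Tendsto g (𝓝[>] a) (𝓝 L))
    (hdiff : ∀ x ∈ Ioo a b, DifferentiableAt ℝ g x) (hφ : IntegrableOn φ (Ioo a b))
    (hle : ∀ x ∈ Ioo a b, deriv g x ≤ φ x) :
    g b - L ≤ ∫ x in a..b, φ x := by
  -- Redefining `g a := L` makes `g` continuous on `[a, b]`.
  have hcont' : ContinuousOn (Function.update g a L) (Icc a b) := by
    rw [continuousOn_update_iff, Icc_sdiff_left]
    exact ⟨hcont, fun _ => hlim.mono_left (nhdsWithin_mono _ Ioc_subset_Ioi_self)⟩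
  have hderiv : ∀ x ∈ Ioo a b,
      HasDerivWithinAt (Function.update g a L) (deriv g x) (Ioi x) x := by
    intro x hx
    have hxa : ∀ᶠ y in 𝓝 x, Function.update g a L y = g y :=
      (eventually_ne_nhds hx.1.ne').mono fun y hy => Function.update_of_ne hy _ _
    exact ((hdiff x hx).hasDerivAt.congr_of_eventuallyEq hxa).hasDerivWithinAt
  have := intervalIntegral.sub_le_integral_of_hasDeriv_right_of_le hab.le hcont' hderiv
    (by rwa [integrableOn_Icc_iff_integrableOn_Ioo]) hle
  rwa [Function.update_self, Function.update_of_ne hab.ne'] at this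

theorem rpow_half_sub_rpow_three_halves_mul {c x : ℝ} (hc : 0 ≤ c)
    (hx : 0 ≤ 1 - c ^ ((1 : ℝ) / 2) * x) :
    (c - c ^ ((3 : ℝ) / 2) * x) ^ ((1 : ℝ) / 2) =
      c ^ ((1 : ℝ) / 2) * (1 - c ^ ((1 : ℝ) / 2) * x) ^ ((1 : ℝ) / 2) := by
  have hc32 : c ^ ((3 : ℝ) / 2) = c * c ^ ((1 : ℝ) / 2) := by
    rw [show (3 : ℝ) / 2 = 1 + 1 / 2 by norm_num, rpow_add' hc (by norm_num), rpow_one]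
  rw [← mul_rpow hc hx, hc32]
  ring_nf

theorem deriv_rpow_three_halves_le {B : ℝ → ℝ} {v c m : ℝ} (hc : 0 ≤ c) (hBv : 0 < B v)
    (hdiff : DifferentiableAt ℝ B v)
    (hx : 0 ≤ 1 - c ^ ((1 : ℝ) / 2) * B v ^ (-(1 : ℝ) / 2) * m)
    (hderiv : deriv B v ≤ B v ^ (-(1 : ℝ) / 2) *
      (c - c ^ ((3 : ℝ) / 2) * B v ^ (-(1 : ℝ) / 2) * m) ^ ((1 : ℝ) / 2)) :
    deriv (fun v => B v ^ ((3 : ℝ) / 2)) v ≤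
      3 / 2 * c ^ ((1 : ℝ) / 2) *
        (1 - c ^ ((1 : ℝ) / 2) * B v ^ (-(1 : ℝ) / 2) * m) ^ ((1 : ℝ) / 2) := by
  have hroot : (c - c ^ ((3 : ℝ) / 2) * B v ^ (-(1 : ℝ) / 2) * m) ^ ((1 : ℝ) / 2) =
      c ^ ((1 : ℝ) / 2) * (1 - c ^ ((1 : ℝ) / 2) * B v ^ (-(1 : ℝ) / 2) * m) ^ ((1 : ℝ) / 2) := by
    simpa only [mul_assoc] using
      rpow_half_sub_rpow_three_halves_mul (x := B v ^ (-(1 : ℝ) / 2) * m) hc (by rwa [← mul_assoc])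
  have hcancel : B v ^ ((3 : ℝ) / 2 - 1) * B v ^ (-(1 : ℝ) / 2) = 1 := by
    rw [← rpow_add hBv]; norm_num
  rw [hroot] at hderiv
  rw [deriv_rpow_const hdiff (Or.inr (by norm_num))]
  calc deriv B v * (3 / 2) * B v ^ ((3 : ℝ) / 2 - 1)
      ≤ B v ^ (-(1 : ℝ) / 2) * (c ^ ((1 : ℝ) / 2) *
          (1 - c ^ ((1 : ℝ) / 2) * B v ^ (-(1 : ℝ) / 2) * m) ^ ((1 : ℝ) / 2)) *
          (3 / 2) * B v ^ ((3 : ℝ) / 2 - 1) := by gcongr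
    _ = _ := by linear_combination (3 / 2 * c ^ ((1 : ℝ) / 2) *
          (1 - c ^ ((1 : ℝ) / 2) * B v ^ (-(1 : ℝ) / 2) * m) ^ ((1 : ℝ) / 2)) * hcancel

theorem le_rpow_mul_rpow_of_rpow_three_halves_le {y k I : ℝ} (hy : 0 ≤ y) (hk : 0 ≤ k)
    (hI : 0 ≤ I) (h : y ^ ((3 : ℝ) / 2) ≤ k ^ ((1 : ℝ) / 2) * I) :
    y ≤ k ^ ((1 : ℝ) / 3) * I ^ ((2 : ℝ) / 3) :=
  calc y = (y ^ ((3 : ℝ) / 2)) ^ ((2 : ℝ) / 3) := by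
        rw [← rpow_mul hy]; norm_num
    _ ≤ (k ^ ((1 : ℝ) / 2) * I) ^ ((2 : ℝ) / 3) := by gcongr
    _ = k ^ ((1 : ℝ) / 3) * I ^ ((2 : ℝ) / 3) := by
        rw [mul_rpow (by positivity) hI, ← rpow_mul hk]; norm_num

theorem three_halves_mul_rpow_half_sixteen_pi :
    3 / 2 * (16 * π) ^ ((1 : ℝ) / 2) = (36 * π) ^ ((1 : ℝ) / 2) := by
  rw [← sqrt_eq_rpow, ← sqrt_eq_rpow, show 36 * π = (3 / 2) ^ 2 * (16 * π) by ring,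
    sqrt_mul (x := (3 / 2) ^ 2) (by positivity), sqrt_sq (by norm_num)]

theorem hawking_mass_isoperimetric_ineq_general (v₀ : ℝ) (hv₀ : 0 < v₀) (B m : ℝ → ℝ)
    (hB_cont : ContinuousOn B (Ioc 0 v₀))
    (hB_pos : ∀ v ∈ Ioc 0 v₀, 0 < B v)
    (hB_lim : Tendsto B (nhdsWithin 0 (Ioi 0)) (nhds 0))
    (h_nonneg : ∀ v ∈ Ioc 0 v₀,
      0 ≤ 1 - (16 * π) ^ ((1 : ℝ) / 2) * (B v) ^ (-(1 : ℝ) / 2) * m v)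
    (h_int : IntegrableOn
      (fun v => (1 - (16 * π) ^ ((1 : ℝ) / 2) * (B v) ^ (-(1 : ℝ) / 2) * m v) ^ ((1 : ℝ) / 2))
      (Ioo 0 v₀))
    (hB_deriv : ∀ v ∈ Ioo 0 v₀, DifferentiableAt ℝ B v ∧
      deriv B v ≤ (B v) ^ (-(1 : ℝ) / 2) *
        (16 * π - (16 * π) ^ ((3 : ℝ) / 2) * (B v) ^ (-(1 : ℝ) / 2) * m v) ^ ((1 : ℝ) / 2)) :
    B v₀ ≤ (36 * π) ^ ((1 : ℝ) / 3) *
      (∫ v in (0 : ℝ)..v₀,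
        (1 - (16 * π) ^ ((1 : ℝ) / 2) * (B v) ^ (-(1 : ℝ) / 2) * m v) ^ ((1 : ℝ) / 2)) ^
        ((2 : ℝ) / 3) := by
  set f : ℝ → ℝ :=
    fun v => (1 - (16 * π) ^ ((1 : ℝ) / 2) * (B v) ^ (-(1 : ℝ) / 2) * m v) ^ ((1 : ℝ) / 2)
  have hI : 0 ≤ ∫ v in (0 : ℝ)..v₀, f v := by
    rw [intervalIntegral.integral_of_le hv₀.le]
    exact setIntegral_nonneg measurableSet_Ioc fun v hv => rpow_nonneg (h_nonneg v hv) _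
  have hlim : Tendsto (fun v => B v ^ ((3 : ℝ) / 2)) (𝓝[>] 0) (𝓝 0) := by
    simpa [Function.comp_def] using
      ((continuous_rpow_const (q := (3 : ℝ) / 2) (by norm_num)).tendsto 0).comp hB_lim
  have hFTC := sub_le_integral_of_tendsto_nhdsGT_of_deriv_le hv₀
    (hB_cont.rpow_const fun _ _ => Or.inr (by norm_num)) hlim
    (fun v hv => (hB_deriv v hv).1.rpow_const (Or.inr (by norm_num)))
    (h_int.const_mul (3 / 2 * (16 * π) ^ ((1 : ℝ) / 2)))
    (fun v hv => deriv_rpow_three_halves_le (by positivity) (hB_pos v (Ioo_subset_Ioc_self hv))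
      (hB_deriv v hv).1 (h_nonneg v (Ioo_subset_Ioc_self hv)) (hB_deriv v hv).2)
  rw [sub_zero, intervalIntegral.integral_const_mul, three_halves_mul_rpow_half_sixteen_pi]
    at hFTC
  exact le_rpow_mul_rpow_of_rpow_three_halves_le (hB_pos v₀ ⟨hv₀, le_rfl⟩).le (by positivity)
    hI hFTC

/-- Inequality (3.8) of the paper: along the weak inverse mean curvature flow,
with `B(v)` the area of the flow surface enclosing volume `v` and `m(v)` its Hawking
mass, `B(v₀) ≤ (36π)^{1/3} (∫₀^{v₀} (1 - (16π)^{1/2} B(v)^{-1/2} m(v))^{1/2} dv)^{2/3}`. -/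
theorem hawking_mass_isoperimetric_ineq (v₀ : ℝ) (hv₀ : 0 < v₀) (B m : ℝ → ℝ)
    (hB_cont : ContinuousOn B (Ioc 0 v₀))
    (hB_pos : ∀ v ∈ Ioc 0 v₀, 0 < B v)
    (hB_lim : Tendsto B (nhdsWithin 0 (Ioi 0)) (nhds 0))
    (hm_cont : ContinuousOn m (Ioc 0 v₀))
    (h_nonneg : ∀ v ∈ Ioc 0 v₀,
      0 ≤ 1 - (16 * π) ^ ((1 : ℝ) / 2) * (B v) ^ (-(1 : ℝ) / 2) * m v)
    (h_int : IntegrableOn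
      (fun v => (1 - (16 * π) ^ ((1 : ℝ) / 2) * (B v) ^ (-(1 : ℝ) / 2) * m v) ^ ((1 : ℝ) / 2))
      (Ioo 0 v₀))
    (hB_deriv : ∀ v ∈ Ioo 0 v₀, DifferentiableAt ℝ B v ∧
      deriv B v ≤ (B v) ^ (-(1 : ℝ) / 2) *
        (16 * π - (16 * π) ^ ((3 : ℝ) / 2) * (B v) ^ (-(1 : ℝ) / 2) * m v) ^ ((1 : ℝ) / 2)) :
    B v₀ ≤ (36 * π) ^ ((1 : ℝ) / 3) *
      (∫ v in (0 : ℝ)..v₀,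
        (1 - (16 * π) ^ ((1 : ℝ) / 2) * (B v) ^ (-(1 : ℝ) / 2) * m v) ^ ((1 : ℝ) / 2)) ^
        ((2 : ℝ) / 3) :=
  hawking_mass_isoperimetric_ineq_general v₀ hv₀ B m hB_cont hB_pos hB_lim h_nonneg h_int hB_deriv
end

section
/- Let π denote the real number pi. Let v₀ > 0 and let B, m : (0, v₀] → ℝ, with B continuous, B(v) > 0 for all v ∈ (0, v₀], B(v) → 0 as v → 0⁺, and m continuous. Assume that 1 − (16π)^{1/2} B(v)^{−1/2} m(v) ≥ 0 for all v ∈ (0, v₀], that the function v ↦ (1 − (16π)^{1/2} B(v)^{−1/2} m(v))^{1/2} is integrable on (0, v₀), and that B is differentiable at every v ∈ (0, v₀) with B'(v) ≤ B(v)^{−1/2} (16π − (16π)^{3/2} B(v)^{−1/2} m(v))^{1/2}. If in addition m(v) > 0 for all v ∈ (0, v₀], then the strict inequality B(v₀) < (36π)^{1/3} v₀^{2/3} holds. -/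
open Set MeasureTheory Real Filter Topology

/-! Along the flow, `(B^{3/2})' = (3/2) B^{1/2} B' ≤ (36π)^{1/2} g` with
`g = (1 - (16π)^{1/2} B^{-1/2} m)^{1/2}`, and `B^{3/2} → 0` at the origin, so integrating from `0`
gives `B(v₀)^{3/2} ≤ (36π)^{1/2} ∫₀^{v₀} g`. Positivity of `m` makes `g < 1`, hence the integral
is strictly less than `v₀`, and raising to the power `2/3` gives the claim. -/

theorem sub_le_integral_of_hasDeriv_right_of_tendsto {f f' φ : ℝ → ℝ} {a b L : ℝ} (hab : a < b)
    (hcont : ContinuousOn f (Ioc a b)) (hlim : Tendsto f (𝓝[>] a) (𝓝 L))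
    (hderiv : ∀ x ∈ Ioo a b, HasDerivWithinAt f (f' x) (Ioi x) x)
    (hφ : IntegrableOn φ (Icc a b)) (hf'φ : ∀ x ∈ Ioo a b, f' x ≤ φ x) :
    f b - L ≤ ∫ x in a..b, φ x := by
  have hprim : Tendsto (fun t => ∫ x in t..b, φ x) (𝓝[>] a) (𝓝 (∫ x in a..b, φ x)) := by
    rw [← uIcc_of_le hab.le] at hφ
    exact ((intervalIntegral.continuousOn_primitive_interval_left hφ) a left_mem_uIcc
      ).mono_of_mem_nhdsWithin (by simpa [uIcc_of_le hab.le] using Icc_mem_nhdsGT hab)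
  refine le_of_tendsto_of_tendsto (hlim.const_sub (f b)) hprim ?_
  filter_upwards [Ioo_mem_nhdsGT hab] with t ht
  have hsub : Icc t b ⊆ Ioc a b := Icc_subset_Ioc_iff ht.2.le |>.2 ⟨ht.1, le_rfl⟩
  have hsub' : Ioo t b ⊆ Ioo a b := Ioo_subset_Ioo_left ht.1.le
  exact intervalIntegral.sub_le_integral_of_hasDeriv_right_of_le ht.2.le (hcont.mono hsub)
    (fun x hx => hderiv x (hsub' hx)) (hφ.mono_set (Icc_subset_Icc_left ht.1.le))
    (fun x hx => hf'φ x (hsub' hx))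

theorem intervalIntegral.integral_lt_mul_sub_of_lt {g : ℝ → ℝ} {a b c : ℝ} (hab : a < b)
    (hg : IntervalIntegrable g volume a b) (hlt : ∀ x ∈ Ioo a b, g x < c) :
    ∫ x in a..b, g x < c * (b - a) := by
  have hpos : 0 < ∫ x in a..b, (c - g x) :=
    intervalIntegral.intervalIntegral_pos_of_pos_on (intervalIntegrable_const.sub hg)
      (fun x hx => sub_pos.2 (hlt x hx)) hab
  rw [intervalIntegral.integral_sub intervalIntegrable_const hg,
    intervalIntegral.integral_const, smul_eq_mul] at hpos
  linarith

theorem mul_three_halves_mul_rpow_le {a y m d : ℝ} (ha : 0 ≤ a) (hy : 0 < y)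
    (hq : 0 ≤ 1 - a ^ ((1 : ℝ) / 2) * y ^ (-(1 : ℝ) / 2) * m)
    (hd : d ≤ y ^ (-(1 : ℝ) / 2) *
      (a - a ^ ((3 : ℝ) / 2) * y ^ (-(1 : ℝ) / 2) * m) ^ ((1 : ℝ) / 2)) :
    d * ((3 : ℝ) / 2) * y ^ ((3 : ℝ) / 2 - 1) ≤ (3 : ℝ) / 2 * a ^ ((1 : ℝ) / 2) *
      (1 - a ^ ((1 : ℝ) / 2) * y ^ (-(1 : ℝ) / 2) * m) ^ ((1 : ℝ) / 2) := by
  set q := 1 - a ^ ((1 : ℝ) / 2) * y ^ (-(1 : ℝ) / 2) * m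
  have hfactor : a - a ^ ((3 : ℝ) / 2) * y ^ (-(1 : ℝ) / 2) * m = a * q := by
    rw [show (3 : ℝ) / 2 = 1 + 1 / 2 by norm_num, rpow_one_add' ha (by norm_num)]
    ring
  rw [hfactor, mul_rpow ha hq] at hd
  have hcancel : y ^ (-(1 : ℝ) / 2) * y ^ ((3 : ℝ) / 2 - 1) = 1 := by
    rw [← rpow_add hy]; norm_num
  calc d * ((3 : ℝ) / 2) * y ^ ((3 : ℝ) / 2 - 1)
      ≤ y ^ (-(1 : ℝ) / 2) * (a ^ ((1 : ℝ) / 2) * q ^ ((1 : ℝ) / 2)) * ((3 : ℝ) / 2) *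
          y ^ ((3 : ℝ) / 2 - 1) := by gcongr
    _ = (3 : ℝ) / 2 * a ^ ((1 : ℝ) / 2) * q ^ ((1 : ℝ) / 2) *
          (y ^ (-(1 : ℝ) / 2) * y ^ ((3 : ℝ) / 2 - 1)) := by ring
    _ = (3 : ℝ) / 2 * a ^ ((1 : ℝ) / 2) * q ^ ((1 : ℝ) / 2) := by rw [hcancel, mul_one]

theorem three_halves_mul_sqrt_sixteen_pi :
    (3 : ℝ) / 2 * (16 * π) ^ ((1 : ℝ) / 2) = (36 * π) ^ ((1 : ℝ) / 2) := by
  rw [← sqrt_eq_rpow, ← sqrt_eq_rpow, show (36 : ℝ) * π = (3 / 2) ^ 2 * (16 * π) by ring,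
    sqrt_mul (by positivity : (0 : ℝ) ≤ (3 / 2) ^ 2), sqrt_sq (by norm_num)]

theorem lt_rpow_two_thirds_of_rpow_three_halves_lt {x c v : ℝ} (hx : 0 ≤ x) (hc : 0 ≤ c)
    (hv : 0 ≤ v) (h : x ^ ((3 : ℝ) / 2) < c ^ ((1 : ℝ) / 2) * v) :
    x < c ^ ((1 : ℝ) / 3) * v ^ ((2 : ℝ) / 3) := by
  calc x = (x ^ ((3 : ℝ) / 2)) ^ ((2 : ℝ) / 3) := by rw [← rpow_mul hx]; norm_num
    _ < (c ^ ((1 : ℝ) / 2) * v) ^ ((2 : ℝ) / 3) := by gcongr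
    _ = c ^ ((1 : ℝ) / 3) * v ^ ((2 : ℝ) / 3) := by
      rw [mul_rpow (by positivity) hv, ← rpow_mul hc]; norm_num

theorem hawking_mass_strict_bound_general (v₀ : ℝ) (hv₀ : 0 < v₀) (B m : ℝ → ℝ)
    (hB_cont : ContinuousOn B (Ioc 0 v₀))
    (hB_pos : ∀ v ∈ Ioc 0 v₀, 0 < B v)
    (hB_lim : Tendsto B (nhdsWithin 0 (Ioi 0)) (nhds 0))
    (h_nonneg : ∀ v ∈ Ioc 0 v₀,
      0 ≤ 1 - (16 * π) ^ ((1 : ℝ) / 2) * (B v) ^ (-(1 : ℝ) / 2) * m v)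
    (h_int : IntegrableOn
      (fun v => (1 - (16 * π) ^ ((1 : ℝ) / 2) * (B v) ^ (-(1 : ℝ) / 2) * m v) ^ ((1 : ℝ) / 2))
      (Ioo 0 v₀))
    (hB_deriv : ∀ v ∈ Ioo 0 v₀, DifferentiableAt ℝ B v ∧
      deriv B v ≤ (B v) ^ (-(1 : ℝ) / 2) *
        (16 * π - (16 * π) ^ ((3 : ℝ) / 2) * (B v) ^ (-(1 : ℝ) / 2) * m v) ^ ((1 : ℝ) / 2))
    (hm_pos : ∀ v ∈ Ioc 0 v₀, 0 < m v) :
    B v₀ < (36 * π) ^ ((1 : ℝ) / 3) * v₀ ^ ((2 : ℝ) / 3) := by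
  set g := fun v => (1 - (16 * π) ^ ((1 : ℝ) / 2) * (B v) ^ (-(1 : ℝ) / 2) * m v) ^ ((1 : ℝ) / 2)
  have hg_int : IntegrableOn g (Icc 0 v₀) := (integrableOn_Icc_iff_integrableOn_Ioo).2 h_int
  have hg_lt_one : ∀ v ∈ Ioo 0 v₀, g v < 1 := fun v hv => by
    have := hB_pos v (Ioo_subset_Ioc_self hv)
    have := hm_pos v (Ioo_subset_Ioc_self hv)
    exact rpow_lt_one (h_nonneg v (Ioo_subset_Ioc_self hv)) (sub_lt_self _ (by positivity))
      (by norm_num)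
  have hlim : Tendsto (fun v => B v ^ ((3 : ℝ) / 2)) (𝓝[>] 0) (𝓝 0) := by
    simpa [Function.comp_def] using
      (continuousAt_rpow_const 0 ((3 : ℝ) / 2) (by norm_num)).tendsto.comp hB_lim
  have hftc : B v₀ ^ ((3 : ℝ) / 2) - 0 ≤
      ∫ v in 0..v₀, (3 : ℝ) / 2 * (16 * π) ^ ((1 : ℝ) / 2) * g v :=
    sub_le_integral_of_hasDeriv_right_of_tendsto hv₀
      (hB_cont.rpow_const fun v hv => .inl (hB_pos v hv).ne') hlim
      (fun v hv => ((hB_deriv v hv).1.hasDerivAt.rpow_const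
        (.inl (hB_pos v (Ioo_subset_Ioc_self hv)).ne')).hasDerivWithinAt)
      (hg_int.const_mul _)
      (fun v hv => mul_three_halves_mul_rpow_le (by positivity) (hB_pos v (Ioo_subset_Ioc_self hv))
        (h_nonneg v (Ioo_subset_Ioc_self hv)) (hB_deriv v hv).2)
  have hg_lt : ∫ v in 0..v₀, g v < 1 * (v₀ - 0) :=
    intervalIntegral.integral_lt_mul_sub_of_lt hv₀
      ((intervalIntegrable_iff_integrableOn_Ioo_of_le hv₀.le).2 h_int) hg_lt_one
  rw [intervalIntegral.integral_const_mul, three_halves_mul_sqrt_sixteen_pi, sub_zero] at hftc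
  rw [one_mul, sub_zero] at hg_lt
  exact lt_rpow_two_thirds_of_rpow_three_halves_lt (hB_pos v₀ ⟨hv₀, le_rfl⟩).le (by positivity)
    hv₀.le (hftc.trans_lt (mul_lt_mul_of_pos_left hg_lt (by positivity)))

/-- Strict form of inequality (3.8): when the Hawking mass `m(v)` is strictly
positive along the flow, `B(v₀) < (36π)^{1/3} v₀^{2/3}`. -/
theorem hawking_mass_strict_bound (v₀ : ℝ) (hv₀ : 0 < v₀) (B m : ℝ → ℝ)
    (hB_cont : ContinuousOn B (Ioc 0 v₀))
    (hB_pos : ∀ v ∈ Ioc 0 v₀, 0 < B v)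
    (hB_lim : Tendsto B (nhdsWithin 0 (Ioi 0)) (nhds 0))
    (hm_cont : ContinuousOn m (Ioc 0 v₀))
    (h_nonneg : ∀ v ∈ Ioc 0 v₀,
      0 ≤ 1 - (16 * π) ^ ((1 : ℝ) / 2) * (B v) ^ (-(1 : ℝ) / 2) * m v)
    (h_int : IntegrableOn
      (fun v => (1 - (16 * π) ^ ((1 : ℝ) / 2) * (B v) ^ (-(1 : ℝ) / 2) * m v) ^ ((1 : ℝ) / 2))
      (Ioo 0 v₀))
    (hB_deriv : ∀ v ∈ Ioo 0 v₀, DifferentiableAt ℝ B v ∧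
      deriv B v ≤ (B v) ^ (-(1 : ℝ) / 2) *
        (16 * π - (16 * π) ^ ((3 : ℝ) / 2) * (B v) ^ (-(1 : ℝ) / 2) * m v) ^ ((1 : ℝ) / 2))
    (hm_pos : ∀ v ∈ Ioc 0 v₀, 0 < m v) :
    B v₀ < (36 * π) ^ ((1 : ℝ) / 3) * v₀ ^ ((2 : ℝ) / 3) :=
  hawking_mass_strict_bound_general v₀ hv₀ B m hB_cont hB_pos hB_lim h_nonneg h_int hB_deriv hm_pos
end

section
/- Let π denote the real number pi. Let v₀ > 0 and let B, m : (0, v₀] → ℝ, with B continuous, B(v) > 0 for all v ∈ (0, v₀], B(v) → 0 as v → 0⁺, and m continuous. Assume that 1 − (16π)^{1/2} B(v)^{−1/2} m(v) ≥ 0 for all v ∈ (0, v₀], that the function v ↦ (1 − (16π)^{1/2} B(v)^{−1/2} m(v))^{1/2} is integrable on (0, v₀), and that B is differentiable at every v ∈ (0, v₀) with B'(v) ≤ B(v)^{−1/2} (16π − (16π)^{3/2} B(v)^{−1/2} m(v))^{1/2}. If in addition m(v) ≥ 0 for all v ∈ (0, v₀] and B(v₀) = (36π)^{1/3} v₀^{2/3},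 then m(v) = 0 for every v ∈ (0, v₀]. -/
/-!
Along the flow, `F = B^{3/2}` satisfies `F' = (3/2) B^{1/2} B' ≤ c √w`, where `c = (3/2) (16π)^{1/2}`
and `w = (∫_K H² dS) / 16π = 1 - (16π)^{1/2} B^{-1/2} m ≤ 1` because `m ≥ 0`. Integrating from
`0`, where `F` vanishes, gives `B(v₀)^{3/2} ≤ c ∫₀^{v₀} √w ≤ c v₀`, while the Euclidean value
`B(v₀) = (36π)^{1/3} v₀^{2/3}` means exactly `B(v₀)^{3/2} = c v₀`. So the continuous nonnegative
function `1 - √w` has integral zero, hence `w ≡ 1`, i.e. `m ≡ 0`.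
-/

open Set MeasureTheory Real Filter Topology

theorem sub_le_intervalIntegral_of_hasDerivAt_le_of_tendsto {F F' φ : ℝ → ℝ} {a b L : ℝ}
    (hab : a < b) (hF : ContinuousOn F (Ioc a b)) (hFa : Tendsto F (𝓝[>] a) (𝓝 L))
    (hderiv : ∀ x ∈ Ioo a b, HasDerivAt F (F' x) x) (hφ : IntegrableOn φ (Ioo a b))
    (hle : ∀ x ∈ Ioo a b, F' x ≤ φ x) :
    F b - L ≤ ∫ x in a..b, φ x := by
  have hφ' : IntegrableOn φ (Icc a b) := by
    rwa [integrableOn_Icc_iff_integrableOn_Ioo]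
  have htail : Tendsto (fun t => ∫ x in t..b, φ x) (𝓝[>] a) (𝓝 (∫ x in a..b, φ x)) := by
    have h := intervalIntegral.continuousOn_primitive_interval_left (μ := volume)
      (by rwa [uIcc_of_le hab.le])
    rw [uIcc_of_le hab.le] at h
    exact (h a (left_mem_Icc.2 hab.le)).tendsto.mono_left
      (nhdsWithin_le_of_mem (Icc_mem_nhdsGT hab))
  refine le_of_tendsto_of_tendsto (tendsto_const_nhds.sub hFa) htail ?_
  filter_upwards [Ioo_mem_nhdsGT hab] with t ht
  exact intervalIntegral.sub_le_integral_of_hasDeriv_right_of_le ht.2.le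
    (hF.mono fun x hx => ⟨ht.1.trans_le hx.1, hx.2⟩)
    (fun x hx => (hderiv x ⟨ht.1.trans hx.1, hx.2⟩).hasDerivWithinAt)
    (hφ'.mono_set (Icc_subset_Icc_left ht.1.le)) fun x hx => hle x ⟨ht.1.trans hx.1, hx.2⟩

theorem eqOn_zero_of_nonneg_of_intervalIntegral_nonpos {f : ℝ → ℝ} {a b : ℝ} (hab : a ≤ b)
    (hf : ContinuousOn f (Ioc a b)) (hfi : IntervalIntegrable f volume a b)
    (hf₀ : ∀ x ∈ Ioc a b, 0 ≤ f x) (h : ∫ x in a..b, f x ≤ 0) :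
    EqOn f 0 (Ioc a b) := by
  have hnn : 0 ≤ᵐ[volume.restrict (Ioc a b)] f :=
    (ae_restrict_iff' measurableSet_Ioc).2 (Eventually.of_forall hf₀)
  have hzero : ∫ x in a..b, f x = 0 :=
    h.antisymm (by rw [intervalIntegral.integral_of_le hab]; exact integral_nonneg_of_ae hnn)
  exact Measure.eqOn_Ioc_of_ae_eq (μ := volume)
    ((intervalIntegral.integral_eq_zero_iff_of_le_of_nonneg_ae hab hnn hfi).1 hzero) hf
    continuousOn_const

theorem eqOn_const_of_le_of_intervalIntegral_le {f : ℝ → ℝ} {a b C : ℝ} (hab : a ≤ b)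
    (hf : ContinuousOn f (Ioc a b)) (hfi : IntervalIntegrable f volume a b)
    (hle : ∀ x ∈ Ioc a b, f x ≤ C) (h : (b - a) * C ≤ ∫ x in a..b, f x) :
    EqOn f (fun _ => C) (Ioc a b) := by
  have hsub := eqOn_zero_of_nonneg_of_intervalIntegral_nonpos (f := fun x => C - f x) hab
    (continuousOn_const.sub hf) (intervalIntegrable_const.sub hfi) (fun x hx => sub_nonneg.2 (hle x hx)) (by
      rw [intervalIntegral.integral_sub intervalIntegrable_const hfi,
        intervalIntegral.integral_const, smul_eq_mul]
      linarith)
  exact fun x hx => (sub_eq_zero.1 (hsub hx)).symm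

/-- `(∫_K H² dS) / 16π` for a surface `K` of area `A` and Hawking mass `M`. -/
noncomputable def willmoreRatio (A M : ℝ) : ℝ :=
  1 - (16 * π) ^ ((1 : ℝ) / 2) * A ^ (-(1 : ℝ) / 2) * M

theorem sixteen_pi_sub_eq_mul_willmoreRatio (A M : ℝ) :
    16 * π - (16 * π) ^ ((3 : ℝ) / 2) * A ^ (-(1 : ℝ) / 2) * M = 16 * π * willmoreRatio A M := by
  rw [willmoreRatio, show (3 : ℝ) / 2 = 1 + 1 / 2 by norm_num, rpow_add (by positivity), rpow_one]
  ring

theorem willmoreRatio_le_one {A M : ℝ} (hA : 0 ≤ A) (hM : 0 ≤ M) : willmoreRatio A M ≤ 1 := by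
  unfold willmoreRatio
  have : 0 ≤ (16 * π) ^ ((1 : ℝ) / 2) * A ^ (-(1 : ℝ) / 2) * M := by positivity
  linarith

theorem willmoreRatio_eq_one_iff {A M : ℝ} (hA : 0 < A) : willmoreRatio A M = 1 ↔ M = 0 := by
  have : 0 < (16 * π) ^ ((1 : ℝ) / 2) * A ^ (-(1 : ℝ) / 2) := by positivity
  rw [willmoreRatio, sub_eq_self, mul_eq_zero, or_iff_right this.ne']

theorem three_halves_mul_rpow_mul_le {b b' k w : ℝ} (hb : 0 < b) (hk : 0 ≤ k) (hw : 0 ≤ w)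
    (h : b' ≤ b ^ (-(1 : ℝ) / 2) * (k * w) ^ ((1 : ℝ) / 2)) :
    3 / 2 * b ^ ((1 : ℝ) / 2) * b' ≤ 3 / 2 * k ^ ((1 : ℝ) / 2) * w ^ ((1 : ℝ) / 2) := by
  have hbb : b ^ ((1 : ℝ) / 2) * b ^ (-(1 : ℝ) / 2) = 1 := by
    rw [← rpow_add hb]; norm_num
  calc 3 / 2 * b ^ ((1 : ℝ) / 2) * b'
      ≤ 3 / 2 * b ^ ((1 : ℝ) / 2) * (b ^ (-(1 : ℝ) / 2) * (k * w) ^ ((1 : ℝ) / 2)) := by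
        gcongr
    _ = 3 / 2 * k ^ ((1 : ℝ) / 2) * w ^ ((1 : ℝ) / 2) := by
        rw [mul_rpow hk hw]
        linear_combination (3 / 2 * k ^ ((1 : ℝ) / 2) * w ^ ((1 : ℝ) / 2)) * hbb

theorem isoperimetric_rpow_three_halves {v : ℝ} (hv : 0 ≤ v) :
    ((36 * π) ^ ((1 : ℝ) / 3) * v ^ ((2 : ℝ) / 3)) ^ ((3 : ℝ) / 2)
      = 3 / 2 * (16 * π) ^ ((1 : ℝ) / 2) * v := by
  have h36 : (36 : ℝ) * π = (3 / 2) ^ (2 : ℝ) * (16 * π) := by norm_num; ring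
  rw [mul_rpow (by positivity) (by positivity), ← rpow_mul (by positivity), ← rpow_mul hv, h36,
    mul_rpow (by positivity) (by positivity), ← rpow_mul (by norm_num)]
  norm_num

/-- Equality case of inequality (3.8), the analytic half of the rigidity Theorem 1.2:
if the Hawking mass is nonnegative and `B(v₀) = (36π)^{1/3} v₀^{2/3}`, then the
Hawking mass vanishes identically on `(0, v₀]`. -/
theorem hawking_mass_rigidity (v₀ : ℝ) (hv₀ : 0 < v₀) (B m : ℝ → ℝ)
    (hB_cont : ContinuousOn B (Ioc 0 v₀))
    (hB_pos : ∀ v ∈ Ioc 0 v₀, 0 < B v)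
    (hB_lim : Tendsto B (nhdsWithin 0 (Ioi 0)) (nhds 0))
    (hm_cont : ContinuousOn m (Ioc 0 v₀))
    (h_nonneg : ∀ v ∈ Ioc 0 v₀,
      0 ≤ 1 - (16 * π) ^ ((1 : ℝ) / 2) * (B v) ^ (-(1 : ℝ) / 2) * m v)
    (h_int : IntegrableOn
      (fun v => (1 - (16 * π) ^ ((1 : ℝ) / 2) * (B v) ^ (-(1 : ℝ) / 2) * m v) ^ ((1 : ℝ) / 2))
      (Ioo 0 v₀))
    (hB_deriv : ∀ v ∈ Ioo 0 v₀, DifferentiableAt ℝ B v ∧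
      deriv B v ≤ (B v) ^ (-(1 : ℝ) / 2) *
        (16 * π - (16 * π) ^ ((3 : ℝ) / 2) * (B v) ^ (-(1 : ℝ) / 2) * m v) ^ ((1 : ℝ) / 2))
    (hm_nonneg : ∀ v ∈ Ioc 0 v₀, 0 ≤ m v)
    (h_eq : B v₀ = (36 * π) ^ ((1 : ℝ) / 3) * v₀ ^ ((2 : ℝ) / 3)) :
    ∀ v ∈ Ioc 0 v₀, m v = 0 := by
  set c := 3 / 2 * (16 * π) ^ ((1 : ℝ) / 2)
  set g := fun v => willmoreRatio (B v) (m v) ^ ((1 : ℝ) / 2)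
  have hg_cont : ContinuousOn g (Ioc 0 v₀) :=
    (continuousOn_const.sub ((continuousOn_const.mul (hB_cont.rpow_const fun v hv =>
      .inl (hB_pos v hv).ne')).mul hm_cont)).rpow_const fun _ _ => .inr (by norm_num)
  have hF_deriv : ∀ v ∈ Ioo 0 v₀, HasDerivAt (fun v => B v ^ ((3 : ℝ) / 2))
      (3 / 2 * B v ^ ((1 : ℝ) / 2) * deriv B v) v := by
    intro v hv
    convert (hB_deriv v hv).1.hasDerivAt.rpow_const (p := (3 : ℝ) / 2) (.inr (by norm_num))
      using 1
    norm_num; ring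
  have hF_le : ∀ v ∈ Ioo 0 v₀, 3 / 2 * B v ^ ((1 : ℝ) / 2) * deriv B v ≤ c * g v := by
    intro v hv
    have hv' := Ioo_subset_Ioc_self hv
    refine three_halves_mul_rpow_mul_le (hB_pos v hv') (by positivity) (h_nonneg v hv') ?_
    simpa only [sixteen_pi_sub_eq_mul_willmoreRatio] using (hB_deriv v hv).2
  have hF_lim : Tendsto (fun v => B v ^ ((3 : ℝ) / 2)) (𝓝[>] 0) (𝓝 0) := by
    simpa using hB_lim.rpow_const (p := (3 : ℝ) / 2) (.inr (by norm_num))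
  have hv₀_le : (v₀ - 0) * 1 ≤ ∫ v in (0 : ℝ)..v₀, g v := by
    have h := sub_le_intervalIntegral_of_hasDerivAt_le_of_tendsto hv₀
      (hB_cont.rpow_const fun _ _ => .inr (by norm_num)) hF_lim hF_deriv (h_int.const_mul c) hF_le
    rw [h_eq, isoperimetric_rpow_three_halves hv₀.le, intervalIntegral.integral_const_mul,
      sub_zero] at h
    rw [sub_zero, mul_one]
    exact le_of_mul_le_mul_left h (by positivity)
  have hg_one : EqOn g (fun _ => 1) (Ioc 0 v₀) :=
    eqOn_const_of_le_of_intervalIntegral_le hv₀.le hg_cont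
      ((intervalIntegrable_iff_integrableOn_Ioo_of_le hv₀.le).2 h_int)
      (fun v hv => rpow_le_one (h_nonneg v hv)
        (willmoreRatio_le_one (hB_pos v hv).le (hm_nonneg v hv)) (by norm_num)) hv₀_le
  intro v hv
  rw [← willmoreRatio_eq_one_iff (hB_pos v hv), ← sqrt_eq_one, sqrt_eq_rpow]
  exact hg_one hv
end
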